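/- Under the attributed Erdős–Rényi graph pair model G(n,p,s_u; m,q,s_a) with q = o(1), s_a = Θ(1), and m q s_a² ≥ (1+ε) log n for some constant ε > 0, run only Step 1 of Algorithm AttrRich with threshold x = (1−δ_x) m q s_a², where 1−δ_x = Δ_x/log(1/q) for the constant Δ_x = max{1, 3/(1+ε)}. Then with probability tending to 1 as n → ∞, the resulting anchor set S1 equals exactly {(i, Π*(i)) : i a user}, i.e., Step 1 alone exactly recovers Π* using only the user–attribute edges. -/

import Mathlib

open MeasureTheory ProbabilityTheory Filter Finset

noncomputable section

namespace AttrAlign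

/-- The Bernoulli measure on `Bool` with success probability `r` (clamped to `[0,1]`). -/
def bern (r : ℝ) : Measure Bool :=
  (PMF.bernoulli (min (Real.toNNReal r) 1) (min_le_right _ _)).toMeasure

/-- The uniform measure on a finite type (the zero measure if the type is empty). -/
def uniformMeasure (α : Type*) [Fintype α] [MeasurableSpace α] : Measure α := by
  classical
  exact if h : Nonempty α then (@PMF.uniformOfFintype α _ h).toMeasure else 0

instance permMeasurableSpace (n : ℕ) : MeasurableSpace (Equiv.Perm (Fin n)) := ⊤

/-- Sample space for the attributed Erdős–Rényi graph pair model `G(n,p,s_u; m,q,s_a)`: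
base user–user edge indicators, base user–attribute edge indicators, the two subsampling
indicator families for `G₁`, the two subsampling indicator families for `G₂`, and the
anonymizing permutation `Π*`.  Only the entries with `i < j` of the user–user indicator
matrices are used. -/
abbrev Config (n m : ℕ) :=
  (Fin n → Fin n → Bool) × (Fin n → Fin m → Bool) ×
    (Fin n → Fin n → Bool) × (Fin n → Fin m → Bool) ×
    (Fin n → Fin n → Bool) × (Fin n → Fin m → Bool) × Equiv.Perm (Fin n)

/-- i.i.d. `Bern(r)` measure on a `k × l` matrix of Booleans. -/
def edgeMeasure (k l : ℕ) (r : ℝ) : Measure (Fin k → Fin l → Bool) :=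
  Measure.pi fun _ => Measure.pi fun _ => bern r

/-- The law of the attributed Erdős–Rényi graph pair model `G(n,p,s_u; m,q,s_a)`:
all edge indicators are independent, base user–user edges are `Bern(p)`, base
user–attribute edges are `Bern(q)`, the user–user subsampling indicators are `Bern(s_u)`,
the user–attribute subsampling indicators are `Bern(s_a)`, and the permutation `Π*` is
uniform. -/
def attrMeasure (n m : ℕ) (p q su sa : ℝ) : Measure (Config n m) :=
  (edgeMeasure n n p).prod ((edgeMeasure n m q).prod ((edgeMeasure n n su).prod
    ((edgeMeasure n m sa).prod ((edgeMeasure n n su).prod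
      ((edgeMeasure n m sa).prod (uniformMeasure (Equiv.Perm (Fin n))))))))

variable {n m : ℕ}

def uu0 (ω : Config n m) : Fin n → Fin n → Bool := ω.1
def ua0 (ω : Config n m) : Fin n → Fin m → Bool := ω.2.1
def suG1 (ω : Config n m) : Fin n → Fin n → Bool := ω.2.2.1
def saG1 (ω : Config n m) : Fin n → Fin m → Bool := ω.2.2.2.1
def suG2 (ω : Config n m) : Fin n → Fin n → Bool := ω.2.2.2.2.1
def saG2 (ω : Config n m) : Fin n → Fin m → Bool := ω.2.2.2.2.2.1
/-- The true permutation `Π*`. -/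
def pstar (ω : Config n m) : Equiv.Perm (Fin n) := ω.2.2.2.2.2.2

/-- Symmetrized edge indicator on unordered pairs of users (no self loops). -/
def symEdge {k : ℕ} (f : Fin k → Fin k → Bool) (i j : Fin k) : Bool :=
  if i < j then f i j else if j < i then f j i else false

/-- Adjacency of users `i` and `j` in `G₁`. -/
def G1uu (ω : Config n m) (i j : Fin n) : Bool :=
  symEdge (fun a b => uu0 ω a b && suG1 ω a b) i j

/-- Adjacency of users `i` and `j` in `G₂`. -/
def G2uu (ω : Config n m) (i j : Fin n) : Bool :=
  symEdge (fun a b => uu0 ω a b && suG2 ω a b) i j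

/-- Adjacency of users `i` and `j` in the anonymized graph `G₂'`, obtained by applying
`Π*` to the users of `G₂`. -/
def G2puu (ω : Config n m) (i j : Fin n) : Bool :=
  G2uu ω ((pstar ω).symm i) ((pstar ω).symm j)

/-- Adjacency of user `i` and attribute `a` in `G₁`. -/
def G1ua (ω : Config n m) (i : Fin n) (a : Fin m) : Bool := ua0 ω i a && saG1 ω i a

/-- Adjacency of user `i` and attribute `a` in `G₂`. -/
def G2ua (ω : Config n m) (i : Fin n) (a : Fin m) : Bool := ua0 ω i a && saG2 ω i a

/-- Adjacency of user `j` and attribute `a` in the anonymized graph `G₂'`. -/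
def G2pua (ω : Config n m) (j : Fin n) (a : Fin m) : Bool :=
  G2ua ω ((pstar ω).symm j) a

/-- `C i j`: the number of attributes adjacent to user `i` in `G₁` and to user `j` in `G₂'`. -/
def CC (ω : Config n m) (i j : Fin n) : ℕ :=
  (univ.filter fun a : Fin m => G1ua ω i a = true ∧ G2pua ω j a = true).card

/-- The anchor set `{(i,j) : C_ij > x}`. -/
def anchors (x : ℝ) (ω : Config n m) : Finset (Fin n × Fin n) := by
  classical exact univ.filter fun ij : Fin n × Fin n => x < (CC ω ij.1 ij.2 : ℝ)

/-- No two distinct pairs of `S` share a coordinate. -/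
def noConflict {k : ℕ} (S : Finset (Fin k × Fin k)) : Prop :=
  ∀ a ∈ S, ∀ b ∈ S, (a.1 = b.1 ∨ a.2 = b.2) → a = b

/-- Users of `G₁` not matched by the anchor set `S`. -/
def unmatched1 (S : Finset (Fin n × Fin n)) : Finset (Fin n) := by
  classical exact univ.filter fun i : Fin n => ∀ j, (i, j) ∉ S

/-- Users of `G₂'` not matched by the anchor set `S`. -/
def unmatched2 (S : Finset (Fin n × Fin n)) : Finset (Fin n) := by
  classical exact univ.filter fun j : Fin n => ∀ i, (i, j) ∉ S

/-- `W i j`: the number of pairs `(k,l) ∈ S` with `k` adjacent to `i` in `G₁` and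
`l` adjacent to `j` in `G₂'`. -/
def W (ω : Config n m) (S : Finset (Fin n × Fin n)) (i j : Fin n) : ℕ := by
  classical
  exact (S.filter fun kl : Fin n × Fin n =>
    G1uu ω i kl.1 = true ∧ G2puu ω j kl.2 = true).card

end AttrAlign

open AttrAlign

open scoped ENNReal NNReal

/-!
For the true partner, `C_{i,Π*(i)}` is binomial `Bin(m, q s_a²)`; for `j ≠ Π*(i)` it is
`Bin(m, q² s_a²)`. With `μ = m q s_a²` and `L = log (1/q)`, the threshold `x = Δ μ / L` lies far
below the first mean and far above the second. Chernoff bounds with tilts `t = 1/L` and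
`t = 1/(qL)` give `P(C_{i,Π*(i)} ≤ x) ≤ exp (-(1 - η) μ)` and `P(C_ij > x) ≤ exp (-(Δ - η) μ)`,
where `η = (1 + Δ log L) / L → 0`. As `μ ≥ (1 + ε) log n` and `(1 + ε) Δ ≥ 3`, a union bound over
the `n` true and fewer than `n²` false pairs leaves `n^(-ε/2) + n^(-1/2)`.
-/

namespace AttrAlign

section Binomial

variable {B : Type*} [Fintype B] [MeasurableSpace B] [MeasurableSingletonClass B]
  (P : B → Prop) [DecidablePred P]

def countIf {M : ℕ} (v : Fin M → B) : ℕ := #{a | P (v a)}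

variable {M : ℕ} (ν : Measure B) [IsProbabilityMeasure ν]

lemma integral_pow_countIf (t : ℝ) :
    ∫ v, t ^ countIf P v ∂Measure.pi (fun _ : Fin M => ν)
      = (1 + ν.real {b | P b} * (t - 1)) ^ M := by
  have hprod : ∀ v : Fin M → B, t ^ countIf P v = ∏ a, (if P (v a) then t else 1) := fun v => by
    rw [← Finset.prod_filter, Finset.prod_const, countIf]
  have hite : ∀ b, (if P b then t else 1) = {b | P b}.indicator (fun _ => t - 1) b + 1 :=
    fun b => by by_cases hb : P b <;> simp [hb]
  simp_rw [hprod]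
  rw [integral_fintype_prod_eq_pow (fun b => if P b then t else 1)]
  simp_rw [hite]
  rw [integral_add Integrable.of_finite (integrable_const _),
    integral_indicator_const _ (MeasurableSet.of_discrete), integral_const]
  simp [add_comm, mul_comm]

lemma measureReal_rpow_le_pow_countIf_le {t : ℝ} (ht : 0 < t) (x : ℝ) :
    (Measure.pi fun _ : Fin M => ν).real {v | t ^ x ≤ t ^ countIf P v}
      ≤ Real.exp (M * ν.real {b | P b} * (t - 1) - x * Real.log t) := by
  set r := ν.real {b | P b}
  have hr : r ≤ 1 := measureReal_le_one
  have hmarkov := mul_meas_ge_le_integral_of_nonneg (μ := Measure.pi fun _ : Fin M => ν)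
    (ae_of_all _ fun v => pow_nonneg ht.le (countIf P v)) Integrable.of_finite (t ^ x)
  rw [integral_pow_countIf] at hmarkov
  have hmgf : (1 + r * (t - 1)) ^ M ≤ Real.exp (M * r * (t - 1)) := by
    rw [mul_assoc, Real.exp_nat_mul]
    exact pow_le_pow_left₀ (by nlinarith [measureReal_nonneg (μ := ν) (s := {b | P b})])
      (by linarith [Real.add_one_le_exp (r * (t - 1))]) M
  have htx : Real.exp (x * Real.log t) = t ^ x := by rw [Real.rpow_def_of_pos ht, mul_comm]
  rw [Real.exp_sub, htx, le_div_iff₀ (Real.rpow_pos_of_pos ht x), mul_comm]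
  exact hmarkov.trans hmgf

lemma measureReal_countIf_le_le {t : ℝ} (ht0 : 0 < t) (ht1 : t ≤ 1) (x : ℝ) :
    (Measure.pi fun _ : Fin M => ν).real {v | (countIf P v : ℝ) ≤ x}
      ≤ Real.exp (M * ν.real {b | P b} * (t - 1) - x * Real.log t) := by
  refine (measureReal_mono fun v (hv : (countIf P v : ℝ) ≤ x) => ?_).trans
    (measureReal_rpow_le_pow_countIf_le P ν ht0 x)
  rw [Set.mem_ofPred_eq, ← Real.rpow_natCast]
  exact Real.rpow_le_rpow_of_exponent_ge ht0 ht1 hv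

lemma measureReal_lt_countIf_le {t : ℝ} (ht : 1 ≤ t) (x : ℝ) :
    (Measure.pi fun _ : Fin M => ν).real {v | x < countIf P v}
      ≤ Real.exp (M * ν.real {b | P b} * (t - 1) - x * Real.log t) := by
  refine (measureReal_mono fun v (hv : x < countIf P v) => ?_).trans
    (measureReal_rpow_le_pow_countIf_le P ν (zero_lt_one.trans_le ht) x)
  rw [Set.mem_ofPred_eq, ← Real.rpow_natCast]
  exact Real.rpow_le_rpow_of_exponent_le ht hv.le

end Binomial

instance (n : ℕ) : MeasurableSingletonClass (Equiv.Perm (Fin n)) :=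
  ⟨fun _ => MeasurableSpace.measurableSet_top⟩

instance (n m : ℕ) : DiscreteMeasurableSpace (Config n m) :=
  MeasurableSingletonClass.toDiscreteMeasurableSpace

instance (r : ℝ) : IsProbabilityMeasure (bern r) := by
  unfold bern; infer_instance

instance (k l : ℕ) (r : ℝ) : IsProbabilityMeasure (edgeMeasure k l r) := by
  unfold edgeMeasure; infer_instance

instance (α : Type*) [Fintype α] [MeasurableSpace α] [Nonempty α] :
    IsProbabilityMeasure (uniformMeasure α) := by
  rw [uniformMeasure, dif_pos ‹_›]; infer_instance

instance (n m : ℕ) (p q su sa : ℝ) : IsProbabilityMeasure (attrMeasure n m p q su sa) := by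
  unfold attrMeasure; infer_instance

lemma bern_true {r : ℝ} (hr : r ≤ 1) : bern r {true} = ENNReal.ofReal r := by
  rw [bern, PMF.toMeasure_apply_singleton _ _ (measurableSet_singleton _)]
  change ((min r.toNNReal 1 : ℝ≥0) : ℝ≥0∞) = _
  rw [min_eq_left (Real.toNNReal_le_one.2 hr)]
  rfl

lemma prod_apply_singleton {α β : Type*} [MeasurableSpace α] [MeasurableSpace β]
    (μ : Measure α) (ν : Measure β) [SigmaFinite ν] (z : α × β) :
    μ.prod ν {z} = μ {z.1} * ν {z.2} := by
  rw [← Set.singleton_prod_singleton, Measure.prod_prod]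

lemma edgeMeasure_rows {k l : ℕ} (r : ℝ) (T : Finset (Fin k)) (c : Fin k → Fin l → Bool) :
    edgeMeasure k l r {f | ∀ w ∈ T, f w = c w} = ∏ w ∈ T, ∏ a, bern r {c w a} := by
  classical
  have hbox : {f : Fin k → Fin l → Bool | ∀ w ∈ T, f w = c w}
      = Set.univ.pi fun w => if w ∈ T then {c w} else Set.univ := by
    ext f
    simp only [Set.mem_ofPred_eq, Set.mem_univ_pi]
    refine forall_congr' fun w => ?_
    split_ifs with hw <;> simp [hw]
  simp only [edgeMeasure, hbox, Measure.pi_pi, apply_ite, Measure.pi_singleton, measure_univ]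
  rw [Finset.prod_ite_mem, Finset.univ_inter]

lemma edgeMeasure_row {k l : ℕ} (r : ℝ) (i : Fin k) (c : Fin l → Bool) :
    edgeMeasure k l r {f | f i = c} = ∏ a, bern r {c a} := by
  simpa using edgeMeasure_rows r {i} fun _ => c

lemma edgeMeasure_two_rows {k l : ℕ} (r : ℝ) {i i' : Fin k} (hne : i ≠ i') (c c' : Fin l → Bool) :
    edgeMeasure k l r {f | f i = c ∧ f i' = c'} = (∏ a, bern r {c a}) * ∏ a, bern r {c' a} := by
  classical
  have h := edgeMeasure_rows r {i, i'} fun w => if w = i then c else c'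
  rw [Finset.prod_pair hne, if_pos rfl, if_neg hne.symm] at h
  rw [← h]
  congr 1
  ext f
  simp [hne.symm]

variable {n m : ℕ}

lemma attrMeasure_uaLayers (p q su sa : ℝ) (S₁ S₂ S₃ : Set (Fin n → Fin m → Bool)) :
    attrMeasure n m p q su sa {ω | ua0 ω ∈ S₁ ∧ saG1 ω ∈ S₂ ∧ saG2 ω ∈ S₃}
      = edgeMeasure n m q S₁ * edgeMeasure n m sa S₂ * edgeMeasure n m sa S₃ := by
  have hbox : {ω : Config n m | ua0 ω ∈ S₁ ∧ saG1 ω ∈ S₂ ∧ saG2 ω ∈ S₃}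
      = Set.univ ×ˢ S₁ ×ˢ Set.univ ×ˢ S₂ ×ˢ Set.univ ×ˢ S₃ ×ˢ Set.univ := by
    ext ω; simp [ua0, saG1, saG2]
  simp only [hbox, attrMeasure, Measure.prod_prod, measure_univ, one_mul, mul_one, mul_assoc]

def pairedRow (i : Fin n) (ω : Config n m) : Fin m → Bool × Bool × Bool :=
  fun a => (ua0 ω i a, saG1 ω i a, saG2 ω i a)

def crossRow (i i' : Fin n) (ω : Config n m) : Fin m → (Bool × Bool) × Bool × Bool :=
  fun a => ((ua0 ω i a, saG1 ω i a), (ua0 ω i' a, saG2 ω i' a))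

def pairedLaw (q sa : ℝ) : Measure (Bool × Bool × Bool) :=
  (bern q).prod ((bern sa).prod (bern sa))

def crossLaw (q sa : ℝ) : Measure ((Bool × Bool) × Bool × Bool) :=
  ((bern q).prod (bern sa)).prod ((bern q).prod (bern sa))

instance (q sa : ℝ) : IsProbabilityMeasure (pairedLaw q sa) := by
  unfold pairedLaw; infer_instance

instance (q sa : ℝ) : IsProbabilityMeasure (crossLaw q sa) := by
  unfold crossLaw; infer_instance

lemma map_pairedRow (p q su sa : ℝ) (i : Fin n) :
    (attrMeasure n m p q su sa).map (pairedRow i) = Measure.pi fun _ => pairedLaw q sa := by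
  refine Measure.ext_of_singleton fun g => ?_
  have hpre : pairedRow i ⁻¹' {g} = {ω | ua0 ω ∈ {f | f i = fun a => (g a).1} ∧
      saG1 ω ∈ {f | f i = fun a => (g a).2.1} ∧ saG2 ω ∈ {f | f i = fun a => (g a).2.2}} := by
    ext ω
    simp [pairedRow, funext_iff, Prod.ext_iff, forall_and]
  rw [Measure.map_apply .of_discrete (measurableSet_singleton g), hpre, attrMeasure_uaLayers,
    edgeMeasure_row, edgeMeasure_row, edgeMeasure_row, Measure.pi_singleton]
  simp only [pairedLaw, prod_apply_singleton, Finset.prod_mul_distrib, mul_assoc]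

lemma map_crossRow (p q su sa : ℝ) {i i' : Fin n} (hne : i ≠ i') :
    (attrMeasure n m p q su sa).map (crossRow i i') = Measure.pi fun _ => crossLaw q sa := by
  refine Measure.ext_of_singleton fun g => ?_
  have hpre : crossRow i i' ⁻¹' {g} =
      {ω | ua0 ω ∈ {f | f i = (fun a => (g a).1.1) ∧ f i' = fun a => (g a).2.1} ∧
        saG1 ω ∈ {f | f i = fun a => (g a).1.2} ∧ saG2 ω ∈ {f | f i' = fun a => (g a).2.2}} := by
    ext ω
    simp only [crossRow, Set.mem_preimage, Set.mem_singleton_iff, funext_iff, Prod.ext_iff,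
      forall_and, Set.mem_ofPred_eq]
    tauto
  rw [Measure.map_apply .of_discrete (measurableSet_singleton g), hpre, attrMeasure_uaLayers,
    edgeMeasure_two_rows _ hne, edgeMeasure_row, edgeMeasure_row, Measure.pi_singleton]
  simp only [crossLaw, prod_apply_singleton, Finset.prod_mul_distrib]
  ring

lemma pairedLaw_real_allTrue {q sa : ℝ} (hq0 : 0 ≤ q) (hq1 : q ≤ 1) (hsa0 : 0 ≤ sa)
    (hsa1 : sa ≤ 1) : (pairedLaw q sa).real {b | b = (true, true, true)} = q * sa ^ 2 := by
  rw [Set.ofPred_eq_eq_singleton, measureReal_def, pairedLaw, prod_apply_singleton,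
    prod_apply_singleton, bern_true hq1, bern_true hsa1, ENNReal.toReal_mul, ENNReal.toReal_mul,
    ENNReal.toReal_ofReal hq0, ENNReal.toReal_ofReal hsa0]
  ring

lemma crossLaw_real_allTrue {q sa : ℝ} (hq0 : 0 ≤ q) (hq1 : q ≤ 1) (hsa0 : 0 ≤ sa)
    (hsa1 : sa ≤ 1) :
    (crossLaw q sa).real {b | b = ((true, true), true, true)} = (q * sa) ^ 2 := by
  simp only [Set.ofPred_eq_eq_singleton, measureReal_def, crossLaw, prod_apply_singleton,
    bern_true hq1, bern_true hsa1, ENNReal.toReal_mul, ENNReal.toReal_ofReal hq0,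
    ENNReal.toReal_ofReal hsa0]
  ring

lemma CC_pstar (ω : Config n m) (i : Fin n) :
    CC ω i (pstar ω i) = countIf (· = (true, true, true)) (pairedRow i ω) := by
  simp only [CC, countIf, pairedRow, G1ua, G2pua, G2ua, Equiv.symm_apply_apply, Prod.ext_iff,
    Bool.and_eq_true]
  congr 1
  ext a
  simp only [Finset.mem_filter]
  tauto

lemma CC_eq_countIf_crossRow (ω : Config n m) (i j : Fin n) :
    CC ω i j = countIf (· = ((true, true), true, true)) (crossRow i ((pstar ω).symm j) ω) := by
  simp [CC, countIf, crossRow, G1ua, G2pua, G2ua, and_assoc]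

def exactRecovery (x : ℝ) : Set (Config n m) :=
  {ω | ∀ i j, (x < (CC ω i j : ℝ) ↔ j = pstar ω i)}

/- The off-diagonal counts are indexed by `i' = Π*⁻¹ j`, whose law does not depend on `Π*`:
the union bound then runs over pairs of distinct users. -/
lemma exactRecovery_compl_subset (x : ℝ) :
    (exactRecovery x : Set (Config n m))ᶜ ⊆
      (⋃ i, pairedRow i ⁻¹' {v | (countIf (· = (true, true, true)) v : ℝ) ≤ x}) ∪
        ⋃ ii' ∈ (univ : Finset (Fin n)).offDiag,
          crossRow ii'.1 ii'.2 ⁻¹' {v | x < countIf (· = ((true, true), true, true)) v} := by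
  intro ω hω
  obtain ⟨i, j, hij⟩ : ∃ i j, ¬(x < (CC ω i j : ℝ) ↔ j = pstar ω i) := by
    simpa [exactRecovery] using hω
  by_cases hj : j = pstar ω i
  · subst hj
    refine Or.inl (Set.mem_iUnion.2 ⟨i, ?_⟩)
    rw [Set.mem_preimage, Set.mem_ofPred_eq, ← CC_pstar]
    exact not_lt.1 fun h => hij (iff_of_true h rfl)
  · refine Or.inr (Set.mem_biUnion (x := (i, (pstar ω).symm j)) ?_ ?_)
    · simpa [Equiv.eq_symm_apply, eq_comm] using hj
    · rw [Set.mem_preimage, Set.mem_ofPred_eq, ← CC_eq_countIf_crossRow]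
      exact not_le.1 fun h => hij (iff_of_false (not_lt.2 h) hj)

lemma measureReal_exactRecovery_compl_le {p q su sa : ℝ} (hq0 : 0 ≤ q) (hq1 : q ≤ 1)
    (hsa0 : 0 ≤ sa) (hsa1 : sa ≤ 1) {t₁ t₂ : ℝ} (ht₁0 : 0 < t₁) (ht₁1 : t₁ ≤ 1) (ht₂ : 1 ≤ t₂)
    (x : ℝ) :
    (attrMeasure n m p q su sa).real (exactRecovery x)ᶜ
      ≤ n * Real.exp (m * q * sa ^ 2 * (t₁ - 1) - x * Real.log t₁)
        + n ^ 2 * Real.exp (m * (q * sa) ^ 2 * (t₂ - 1) - x * Real.log t₂) := by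
  set μ := attrMeasure n m p q su sa
  set e₁ := Real.exp (m * q * sa ^ 2 * (t₁ - 1) - x * Real.log t₁)
  set e₂ := Real.exp (m * (q * sa) ^ 2 * (t₂ - 1) - x * Real.log t₂)
  have hpaired : ∀ i : Fin n,
      μ.real (pairedRow i ⁻¹' {v | (countIf (· = (true, true, true)) v : ℝ) ≤ x}) ≤ e₁ := by
    intro i
    rw [← map_measureReal_apply .of_discrete .of_discrete, map_pairedRow]
    simpa only [pairedLaw_real_allTrue hq0 hq1 hsa0 hsa1, ← mul_assoc] using
      measureReal_countIf_le_le (· = (true, true, true)) (pairedLaw q sa) ht₁0 ht₁1 x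
  have hcross : ∀ ii' ∈ (univ : Finset (Fin n)).offDiag,
      μ.real (crossRow ii'.1 ii'.2 ⁻¹' {v | x < countIf (· = ((true, true), true, true)) v})
        ≤ e₂ := by
    intro ii' hii'
    rw [← map_measureReal_apply .of_discrete .of_discrete,
      map_crossRow _ _ _ _ (mem_offDiag.1 hii').2.2]
    simpa only [crossLaw_real_allTrue hq0 hq1 hsa0 hsa1] using
      measureReal_lt_countIf_le (· = ((true, true), true, true)) (crossLaw q sa) ht₂ x
  calc μ.real (exactRecovery x)ᶜ
      ≤ ∑ i, μ.real (pairedRow i ⁻¹' {v | (countIf (· = (true, true, true)) v : ℝ) ≤ x})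
        + ∑ ii' ∈ (univ : Finset (Fin n)).offDiag, μ.real (crossRow ii'.1 ii'.2 ⁻¹'
            {v | x < countIf (· = ((true, true), true, true)) v}) :=
        (measureReal_mono (exactRecovery_compl_subset x)).trans <|
          (measureReal_union_le _ _).trans <|
            add_le_add (measureReal_iUnion_fintype_le _) (measureReal_biUnion_finset_le _ _)
    _ ≤ ∑ _i : Fin n, e₁ + ∑ _ii' ∈ (univ : Finset (Fin n)).offDiag, e₂ :=
        add_le_add (sum_le_sum fun i _ => hpaired i) (sum_le_sum hcross)
    _ ≤ n * e₁ + n ^ 2 * e₂ := by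
        rw [sum_const, sum_const, card_univ, Fintype.card_fin, offDiag_card, card_univ,
          Fintype.card_fin, nsmul_eq_mul, nsmul_eq_mul, sq]
        gcongr
        exact_mod_cast Nat.sub_le _ _

def slack (Δ L : ℝ) : ℝ := (1 + Δ * Real.log L) / L

lemma lowerTail_exponent_eq {μ Δ L : ℝ} (hL : 0 < L) :
    μ * (1 / L - 1) - Δ * μ / L * Real.log (1 / L) = -((1 - slack Δ L) * μ) := by
  rw [one_div, Real.log_inv, slack]
  field_simp
  ring

lemma upperTail_exponent_le {M q s Δ : ℝ} (hM : 0 ≤ M) (hq : 0 < q)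
    (hL : 0 < Real.log (1 / q)) :
    M * (q * s) ^ 2 * (1 / (q * Real.log (1 / q)) - 1)
        - Δ * (M * q * s ^ 2) / Real.log (1 / q) * Real.log (1 / (q * Real.log (1 / q)))
      ≤ -((Δ - slack Δ (Real.log (1 / q))) * (M * q * s ^ 2)) := by
  set L := Real.log (1 / q)
  have hlog : Real.log (1 / (q * L)) = L - Real.log L := by
    have hlogq : Real.log q = -L := by simp [L, Real.log_inv]
    rw [one_div, Real.log_inv, Real.log_mul hq.ne' hL.ne', hlogq]
    ring
  have hsq : 0 ≤ M * (q * s) ^ 2 := by positivity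
  have heq : M * (q * s) ^ 2 * (1 / (q * L) - 1) - Δ * (M * q * s ^ 2) / L * (L - Real.log L)
      = -((Δ - slack Δ L) * (M * q * s ^ 2)) - M * (q * s) ^ 2 := by
    rw [slack]
    field_simp
    ring
  rw [hlog, heq]
  linarith

lemma pow_mul_exp_neg_le_rpow {N b c : ℝ} {k : ℕ} (hN : 0 < N) (h : (k + c) * Real.log N ≤ b) :
    N ^ k * Real.exp (-b) ≤ N ^ (-c) := by
  rw [← Real.rpow_natCast, Real.rpow_def_of_pos hN, Real.rpow_def_of_pos hN, ← Real.exp_add,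
    Real.exp_le_exp]
  linarith

lemma lowerTail_le {N μ Δ L ε : ℝ} (hN : 1 ≤ N) (hL : 0 < L) (hmean : (1 + ε) * Real.log N ≤ μ)
    (hslack : (1 + ε) * slack Δ L ≤ ε / 2) (hslack1 : slack Δ L ≤ 1) :
    N * Real.exp (μ * (1 / L - 1) - Δ * μ / L * Real.log (1 / L)) ≤ N ^ (-(ε / 2)) := by
  have hlogN : 0 ≤ Real.log N := Real.log_nonneg hN
  have h₁ := mul_le_mul_of_nonneg_left hmean (sub_nonneg.2 hslack1)
  have h₂ := mul_le_mul_of_nonneg_right hslack hlogN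
  rw [lowerTail_exponent_eq hL]
  simpa using pow_mul_exp_neg_le_rpow (k := 1) (zero_lt_one.trans_le hN)
    (by push_cast; linear_combination h₁ + h₂)

lemma upperTail_le {N M q s Δ ε : ℝ} (hN : 1 ≤ N) (hM : 0 ≤ M) (hq : 0 < q)
    (hL : 0 < Real.log (1 / q)) (hmean : (1 + ε) * Real.log N ≤ M * q * s ^ 2)
    (hΔ : 3 ≤ (1 + ε) * Δ) (hslack : (1 + ε) * slack Δ (Real.log (1 / q)) ≤ 1 / 2)
    (hslackΔ : slack Δ (Real.log (1 / q)) ≤ Δ) :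
    N ^ 2 * Real.exp (M * (q * s) ^ 2 * (1 / (q * Real.log (1 / q)) - 1)
        - Δ * (M * q * s ^ 2) / Real.log (1 / q) * Real.log (1 / (q * Real.log (1 / q))))
      ≤ N ^ (-(1 / 2 : ℝ)) := by
  have hlogN : 0 ≤ Real.log N := Real.log_nonneg hN
  have h₁ := mul_le_mul_of_nonneg_left hmean (sub_nonneg.2 hslackΔ)
  have h₂ := mul_le_mul_of_nonneg_right hslack hlogN
  have h₃ := mul_le_mul_of_nonneg_right hΔ hlogN
  refine (mul_le_mul_of_nonneg_left (Real.exp_le_exp.2 (upperTail_exponent_le hM hq hL))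
    (by positivity)).trans (pow_mul_exp_neg_le_rpow (zero_lt_one.trans_le hN) ?_)
  push_cast
  linear_combination h₁ + h₂ + h₃

lemma mul_log_one_div_le_one {q : ℝ} (hq : 0 < q) : q * Real.log (1 / q) ≤ 1 := by
  have h := mul_le_mul_of_nonneg_left (Real.log_le_sub_one_of_pos (one_div_pos.2 hq)) hq.le
  rw [mul_sub, mul_one_div_cancel hq.ne'] at h
  linarith

lemma measureReal_exactRecovery_compl_le_rpow {p q su sa ε Δ : ℝ} (hq0 : 0 < q) (hq1 : q ≤ 1)
    (hsa0 : 0 ≤ sa) (hsa1 : sa ≤ 1) (hε : 0 ≤ ε) (hΔ1 : 1 ≤ Δ) (hΔ : 3 ≤ (1 + ε) * Δ) (hn : 1 ≤ n)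
    (hL1 : 1 ≤ Real.log (1 / q)) (hmean : (1 + ε) * Real.log n ≤ m * q * sa ^ 2)
    (hslack : (1 + ε) * slack Δ (Real.log (1 / q)) ≤ min (ε / 2) (1 / 2)) :
    (attrMeasure n m p q su sa).real (exactRecovery (Δ * (m * q * sa ^ 2) / Real.log (1 / q)))ᶜ
      ≤ (n : ℝ) ^ (-(ε / 2)) + (n : ℝ) ^ (-(1 / 2 : ℝ)) := by
  set L := Real.log (1 / q)
  have hN : (1 : ℝ) ≤ n := by exact_mod_cast hn
  have hslack0 : 0 ≤ slack Δ L :=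
    div_nonneg (by have := Real.log_nonneg hL1; positivity) (by linarith)
  have hslack1 : slack Δ L ≤ 1 / 2 := by nlinarith [min_le_right (ε / 2) (1 / 2)]
  refine (measureReal_exactRecovery_compl_le hq0.le hq1 hsa0 hsa1
    (one_div_pos.2 (by linarith)) ((div_le_one (by linarith)).2 hL1)
    (one_le_one_div (by positivity) (mul_log_one_div_le_one hq0)) _).trans (add_le_add ?_ ?_)
  · exact lowerTail_le hN (by linarith) hmean (hslack.trans (min_le_left _ _)) (by linarith)
  · exact upperTail_le hN (Nat.cast_nonneg _) hq0 (by linarith) hmean hΔ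
      (hslack.trans (min_le_right _ _)) (by linarith)

lemma tendsto_slack (Δ : ℝ) {L : ℕ → ℝ} (hL : Tendsto L atTop atTop) :
    Tendsto (fun k => slack Δ (L k)) atTop (nhds 0) := by
  have hinv : Tendsto (fun k => (L k)⁻¹) atTop (nhds 0) := tendsto_inv_atTop_zero.comp hL
  have hlog : Tendsto (fun k => Real.log (L k) / L k) atTop (nhds 0) :=
    Real.isLittleO_log_id_atTop.tendsto_div_nhds_zero.comp hL
  simpa [slack, add_div, mul_div_assoc] using hinv.add (hlog.const_mul Δ)

lemma tendsto_log_one_div {q : ℕ → ℝ} (hq : Tendsto q atTop (nhds 0)) (hpos : ∀ n, 0 < q n) :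
    Tendsto (fun n => Real.log (1 / q n)) atTop atTop := by
  have hq' : Tendsto q atTop (nhdsWithin 0 (Set.Ioi 0)) :=
    tendsto_nhdsWithin_iff.2 ⟨hq, Eventually.of_forall hpos⟩
  exact (Real.tendsto_log_atTop.comp hq'.inv_tendsto_nhdsGT_zero).congr fun n => by
    rw [Function.comp_apply, Pi.inv_apply, one_div]

lemma tendsto_measure_one_of_measureReal_compl_le {Ω : ℕ → Type*} [∀ n, MeasurableSpace (Ω n)]
    {μ : ∀ n, Measure (Ω n)} [∀ n, IsProbabilityMeasure (μ n)] {S : ∀ n, Set (Ω n)}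
    (hS : ∀ n, MeasurableSet (S n)) {d : ℕ → ℝ} (hd : Tendsto d atTop (nhds 0))
    (h : ∀ᶠ n in atTop, (μ n).real (S n)ᶜ ≤ d n) :
    Tendsto (fun n => μ n (S n)) atTop (nhds 1) := by
  have hcompl : Tendsto (fun n => (μ n).real (S n)ᶜ) atTop (nhds 0) :=
    tendsto_of_tendsto_of_tendsto_of_le_of_le' tendsto_const_nhds hd
      (Eventually.of_forall fun _ => measureReal_nonneg) h
  have hS' : ∀ n, μ n (S n) = ENNReal.ofReal (1 - (μ n).real (S n)ᶜ) := fun n => by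
    rw [probReal_compl_eq_one_sub (hS n), sub_sub_cancel, ofReal_measureReal]
  simp_rw [hS']
  simpa using ENNReal.tendsto_ofReal (tendsto_const_nhds.sub hcompl (a := (1 : ℝ)))

end AttrAlign

open AttrAlign

theorem attrRich_step1_bipartite_alignment_general
    (p q su sa : ℕ → ℝ) (m : ℕ → ℕ) (ε : ℝ)
    (hq01 : ∀ n, 0 < q n ∧ q n < 1)
    (hsa01 : ∀ n, 0 < sa n ∧ sa n ≤ 1)
    (hq : Tendsto q atTop (nhds 0))
    (hε : 0 < ε)
    (hmean : ∀ᶠ n : ℕ in atTop,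
      (1 + ε) * Real.log n ≤ (m n : ℝ) * q n * (sa n) ^ 2) :
    Tendsto (fun n =>
        attrMeasure n (m n) (p n) (q n) (su n) (sa n)
          {ω : Config n (m n) | ∀ i j : Fin n,
            (max 1 (3 / (1 + ε))) * ((m n : ℝ) * q n * (sa n) ^ 2) / Real.log (1 / q n)
                < (CC ω i j : ℝ)
              ↔ j = pstar ω i})
      atTop (nhds 1) := by
  set Δ : ℝ := max 1 (3 / (1 + ε))
  have hΔ : 3 ≤ (1 + ε) * Δ := by
    calc (3 : ℝ) = (1 + ε) * (3 / (1 + ε)) := by field_simp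
      _ ≤ (1 + ε) * Δ := mul_le_mul_of_nonneg_left (le_max_right _ _) (by linarith)
  have hL := tendsto_log_one_div hq fun n => (hq01 n).1
  have hslack : ∀ᶠ n in atTop, (1 + ε) * slack Δ (Real.log (1 / q n)) ≤ min (ε / 2) (1 / 2) :=
    ((tendsto_slack Δ hL).const_mul (1 + ε)).eventually_le_const (by simp [hε])
  refine tendsto_measure_one_of_measureReal_compl_le (fun _ => .of_discrete)
    (d := fun n => (n : ℝ) ^ (-(ε / 2)) + (n : ℝ) ^ (-(1 / 2 : ℝ))) ?_ ?_
  · rw [← add_zero (0 : ℝ)]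
    exact ((tendsto_rpow_neg_atTop (half_pos hε)).comp tendsto_natCast_atTop_atTop).add
      ((tendsto_rpow_neg_atTop one_half_pos).comp tendsto_natCast_atTop_atTop)
  filter_upwards [hslack, hmean, hL.eventually_ge_atTop 1, eventually_ge_atTop 1]
    with n hslack hmean hL1 hn
  exact measureReal_exactRecovery_compl_le_rpow (hq01 n).1 (hq01 n).2.le (hsa01 n).1.le
    (hsa01 n).2 hε.le (le_max_left _ _) hΔ hn hL1 hmean hslack

/-- Specialization to bipartite graph alignment: under the attributed Erdős–Rényi graph
pair model with `q = o(1)`, `s_a = Θ(1)` and `m q s_a² ≥ (1+ε) log n` for a constant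
`ε > 0`, Step 1 of Algorithm `AttrRich` with threshold `x = Δ_x m q s_a² / log(1/q)`,
where `Δ_x = max{1, 3/(1+ε)}`, alone exactly recovers `Π*` using only the
user–attribute edges: with probability tending to `1`, the anchor set `S₁` equals
exactly `{(i, Π*(i)) : i a user}`. -/
theorem attrRich_step1_bipartite_alignment
    (p q su sa : ℕ → ℝ) (m : ℕ → ℕ) (ε : ℝ)
    (hp01 : ∀ n, 0 ≤ p n ∧ p n ≤ 1) (hq01 : ∀ n, 0 < q n ∧ q n < 1)
    (hsu01 : ∀ n, 0 ≤ su n ∧ su n ≤ 1) (hsa01 : ∀ n, 0 < sa n ∧ sa n ≤ 1)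
    (hq : Tendsto q atTop (nhds 0))
    (hsa : ∃ c > 0, ∀ᶠ n : ℕ in atTop, c ≤ sa n)
    (hε : 0 < ε)
    (hmean : ∀ᶠ n : ℕ in atTop,
      (1 + ε) * Real.log n ≤ (m n : ℝ) * q n * (sa n) ^ 2) :
    Tendsto (fun n =>
        attrMeasure n (m n) (p n) (q n) (su n) (sa n)
          {ω : Config n (m n) | ∀ i j : Fin n,
            (max 1 (3 / (1 + ε))) * ((m n : ℝ) * q n * (sa n) ^ 2) / Real.log (1 / q n)
                < (CC ω i j : ℝ)
              ↔ j = pstar ω i})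
      atTop (nhds 1) :=
  attrRich_step1_bipartite_alignment_general p q su sa m ε hq01 hsa01 hq hε hmean
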